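/- The q-Vandermonde summation holds: ₂φ₁[q^{−n}, b; c; q, q] = (c/b; q)_n b^n / (c; q)_n for every nonnegative integer n, provided (c;q)_n ≠ 0. -/

import Mathlib

/-!
The terminating series `φₙ(b, c; z) = ₂φ₁[q⁻ⁿ, b; c; q, z]` satisfies the contiguous relation
`φₙ₊₁(b, c; z) = φₙ(b, c; z) - z q⁻ⁿ⁻¹ (1 - b)/(1 - c) · φₙ(bq, cq; z)`, obtained termwise from
`(q⁻ⁿ⁻¹;q)ₖ₊₁/(q;q)ₖ₊₁ = (q⁻ⁿ;q)ₖ₊₁/(q;q)ₖ₊₁ - q⁻ⁿ⁻¹ (q⁻ⁿ;q)ₖ/(q;q)ₖ` and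
`(b;q)ₖ₊₁ = (1 - b)(bq;q)ₖ`.
At `z = q` the right-hand side `∏_{j<n} (b - c qʲ) / (c;q)ₙ` satisfies the same recursion, so the
identity follows by induction on `n`, for all `b` and `c` at once.
-/

open Finset

/-- The q-Pochhammer symbol `(a;q)_n`. -/
noncomputable def qPoch (a q : ℂ) (n : ℕ) : ℂ := ∏ j ∈ Finset.range n, (1 - a * q ^ j)

lemma qPoch_succ (a q : ℂ) (n : ℕ) : qPoch a q (n + 1) = qPoch a q n * (1 - a * q ^ n) :=
  prod_range_succ _ _

lemma qPoch_succ' (a q : ℂ) (n : ℕ) : qPoch a q (n + 1) = (1 - a) * qPoch (a * q) q n := by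
  simp only [qPoch, prod_range_succ', pow_zero, mul_one, pow_succ', mul_assoc, mul_comm]

lemma qPoch_zpow_neg_succ {q : ℂ} (hq : q ≠ 0) (n : ℕ) :
    qPoch (q ^ (-(n : ℤ))) q (n + 1) = 0 := by
  rw [qPoch_succ, zpow_neg, zpow_natCast, inv_mul_cancel₀ (pow_ne_zero n hq), sub_self, mul_zero]

lemma qPoch_div_qPoch_succ_eq_sub (a : ℂ) {q : ℂ} {k : ℕ} (hk : qPoch q q (k + 1) ≠ 0) :
    qPoch a q (k + 1) / qPoch q q (k + 1)
      = qPoch (a * q) q (k + 1) / qPoch q q (k + 1) - a * (qPoch (a * q) q k / qPoch q q k) := by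
  rw [qPoch_succ q, mul_ne_zero_iff] at hk
  rw [qPoch_succ', qPoch_succ (a * q), qPoch_succ q]
  field_simp [hk.1, hk.2]
  ring

lemma qPoch_div_mul_pow (c q : ℂ) {b : ℂ} (hb : b ≠ 0) (n : ℕ) :
    qPoch (c / b) q n * b ^ n = ∏ j ∈ range n, (b - c * q ^ j) := by
  rw [qPoch, pow_eq_prod_const, ← prod_mul_distrib]
  refine prod_congr rfl fun j _ => ?_
  field_simp

noncomputable def phi21 (n : ℕ) (b c q z : ℂ) : ℂ :=
  ∑ k ∈ range (n + 1),
    qPoch (q ^ (-(n : ℤ))) q k * qPoch b q k / (qPoch q q k * qPoch c q k) * z ^ k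

lemma phi21_eq_sum_range_succ_succ {q : ℂ} (hq : q ≠ 0) (n : ℕ) (b c z : ℂ) :
    phi21 n b c q z = ∑ k ∈ range (n + 2),
      qPoch (q ^ (-(n : ℤ))) q k * qPoch b q k / (qPoch q q k * qPoch c q k) * z ^ k := by
  rw [sum_range_succ _ (n + 1), qPoch_zpow_neg_succ hq, zero_mul, zero_div, zero_mul, add_zero]
  rfl

lemma phi21_succ {q : ℂ} (hq : q ≠ 0) {n : ℕ} (hqq : ∀ k ≤ n + 1, qPoch q q k ≠ 0) (b c z : ℂ) :
    phi21 (n + 1) b c q z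
      = phi21 n b c q z - z / q ^ (n + 1) * (1 - b) / (1 - c) * phi21 n (b * q) (c * q) q z := by
  have hshift : q ^ (-((n + 1 : ℕ) : ℤ)) * q = q ^ (-(n : ℤ)) := by
    rw [← zpow_add_one₀ hq]; push_cast; ring_nf
  rw [phi21_eq_sum_range_succ_succ hq n, phi21, sum_range_succ', sum_range_succ' _ (n + 1),
    phi21, mul_sum, add_sub_right_comm, ← sum_sub_distrib]
  congr 1
  refine sum_congr rfl fun k hk => ?_
  have hA :=
    qPoch_div_qPoch_succ_eq_sub (q ^ (-((n + 1 : ℕ) : ℤ))) (hqq (k + 1) (mem_range.mp hk))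
  rw [hshift] at hA
  simp only [zpow_neg, zpow_natCast] at hA ⊢
  have hB : qPoch b q (k + 1) / qPoch c q (k + 1)
      = (1 - b) / (1 - c) * (qPoch (b * q) q k / qPoch (c * q) q k) := by
    rw [qPoch_succ' b, qPoch_succ' c, mul_div_mul_comm]
  simp only [mul_div_mul_comm _ (qPoch b q _), hA, hB]
  ring

lemma phi21_q_eq_prod_div {q : ℂ} (hq : q ≠ 0) {n : ℕ} (hqq : ∀ k ≤ n, qPoch q q k ≠ 0) {b c : ℂ}
    (hc : qPoch c q n ≠ 0) :
    phi21 n b c q q = (∏ j ∈ range n, (b - c * q ^ j)) / qPoch c q n := by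
  induction n generalizing b c with
  | zero => simp [phi21, qPoch]
  | succ n ih =>
    have hqq' : ∀ k ≤ n, qPoch q q k ≠ 0 := fun k hk => hqq k (by omega)
    obtain ⟨hcn, hcq⟩ := mul_ne_zero_iff.mp (qPoch_succ c q n ▸ hc)
    obtain ⟨hc1, hcqn⟩ := mul_ne_zero_iff.mp (qPoch_succ' c q n ▸ hc)
    have hprod : ∏ j ∈ range n, (b * q - c * q * q ^ j)
        = q ^ n * ∏ j ∈ range n, (b - c * q ^ j) := by
      rw [pow_eq_prod_const, ← prod_mul_distrib]
      exact prod_congr rfl fun j _ => by ring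
    rw [phi21_succ hq hqq, ih hqq' hcn, ih hqq' hcqn, hprod, prod_range_succ, qPoch_succ]
    have hrel := (qPoch_succ c q n).symm.trans (qPoch_succ' c q n)
    field_simp
    linear_combination (-(∏ j ∈ range n, (b - c * q ^ j)) * q ^ (n + 1) * (1 - b)) * hrel

/-- The q-Vandermonde summation:
₂φ₁[q^{−n}, b; c; q, q] = (c/b; q)_n bⁿ / (c; q)_n. -/
theorem q_vandermonde (n : ℕ) (q b c : ℂ) (hq : q ≠ 0) (hb : b ≠ 0)
    (hden : ∀ k ≤ n, qPoch q q k ≠ 0 ∧ qPoch c q k ≠ 0)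
    (hc : qPoch c q n ≠ 0) :
    ∑ k ∈ range (n + 1),
        qPoch (q ^ (-(n : ℤ))) q k * qPoch b q k / (qPoch q q k * qPoch c q k) * q ^ k
      = qPoch (c / b) q n * b ^ n / qPoch c q n := by
  rw [qPoch_div_mul_pow c q hb]
  exact phi21_q_eq_prod_div hq (fun k hk => (hden k hk).1) hc
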